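/- Let f : ℝ^n → ℝ be differentiable with gradient ∇f, let 0 < μ ≤ L, γ > 0, 0 ≤ α < 1, δ ≥ 0, and let g̃ satisfy the composite noise condition with parameters α, δ. Then for all x, z ∈ ℝ^n: (μ/4)·‖x − z + (2/μ)·g̃(z)‖² ≤ ⟪∇f(z), x − z⟫ + (μ/2)‖x − z‖² + (1/μ)·((1 + (1/4)(μ/(2L))^γ)(1+α)² + 2α²)·‖∇f(z)‖² + (1/μ)·(4(2L/μ)^γ + 3)·δ², and (μ/4)·‖x − z + (2/μ)·g̃(z)‖² ≥ ⟪∇f(z), x − z⟫ + (1/μ)·((1 − (1/4)(μ/(2L))^γ)(1−α)² − 2α²)·‖∇f(z)‖² − (1/μ)·(4(2L/μ)^γ + 1)·δ². -/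

import Mathlib

open scoped InnerProductSpace

/-!
Write `u = x - z` and `e = g̃(z) - ∇f(z)`. Expanding squares gives the identity
`(μ/4)‖u + (2/μ)g̃‖² = ⟪∇f, u⟫ + (μ/4)‖u + (2/μ)e‖² + (‖g̃‖² - ‖e‖²)/μ`:
dropping the middle square gives the lower bound, and `‖a + b‖² ≤ 2‖a‖² + 2‖b‖²` the upper one.
The rest is scalar: the noise condition gives `‖e‖ ≤ α‖∇f‖ + δ` and puts `‖g̃‖` between
`(1 ∓ α)‖∇f‖ ∓ δ`, and the cross terms `2ab` of the squares are split by Young's inequality with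
weight `t/4`, where `t = (μ/2L)^γ ≤ 1` and `(2L/μ)^γ = t⁻¹`.
-/

section Scalar

lemma two_mul_le_quarter_mul_sq_add {t : ℝ} (ht : 0 < t) (a d : ℝ) :
    2 * a * d ≤ t / 4 * a ^ 2 + 4 * t⁻¹ * d ^ 2 := by
  have := two_mul_le_add_mul_sq (a := a) (b := d) (by positivity : 0 < t / 4)
  rwa [inv_div, div_eq_mul_inv] at this

variable {a d c t : ℝ}

lemma sq_le_of_le_add (ht : 0 < t) (hc : 0 ≤ c) (h : c ≤ a + d) :
    c ^ 2 ≤ (1 + t / 4) * a ^ 2 + (4 * t⁻¹ + 1) * d ^ 2 := by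
  have := two_mul_le_quarter_mul_sq_add ht a d
  nlinarith [pow_le_pow_left₀ hc h 2]

lemma le_sq_of_sub_le (ht : 0 < t) (ht1 : t ≤ 1) (ha : 0 ≤ a) (h : a - d ≤ c) :
    (1 - t / 4) * a ^ 2 - (4 * t⁻¹ - 1) * d ^ 2 ≤ c ^ 2 := by
  have hinv : 1 ≤ t⁻¹ := one_le_inv₀ ht |>.mpr ht1
  rcases le_or_gt d a with hda | had
  · have := two_mul_le_quarter_mul_sq_add ht a d
    nlinarith [pow_le_pow_left₀ (sub_nonneg.mpr hda) h 2]
  · nlinarith [pow_le_pow_left₀ ha had.le 2, sq_nonneg c, sq_nonneg d]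

end Scalar

section InnerProductSpace

variable {E : Type*} [NormedAddCommGroup E] [InnerProductSpace ℝ E] {μ : ℝ}

lemma quarter_mul_norm_add_smul_sq_eq (hμ : μ ≠ 0) (u v g : E) :
    μ / 4 * ‖u + (2 / μ) • g‖ ^ 2 =
      ⟪v, u⟫_ℝ + μ / 4 * ‖u + (2 / μ) • (g - v)‖ ^ 2 + 1 / μ * (‖g‖ ^ 2 - ‖g - v‖ ^ 2) := by
  simp only [norm_add_sq_real, norm_smul, inner_smul_right, inner_sub_right, mul_pow,
    Real.norm_eq_abs, sq_abs, real_inner_comm u v]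
  field_simp
  ring

lemma inner_add_le_quarter_mul_norm_add_smul_sq (hμ : 0 < μ) (u v g : E) :
    ⟪v, u⟫_ℝ + 1 / μ * (‖g‖ ^ 2 - ‖g - v‖ ^ 2) ≤ μ / 4 * ‖u + (2 / μ) • g‖ ^ 2 := by
  rw [quarter_mul_norm_add_smul_sq_eq hμ.ne' u v]
  nlinarith [sq_nonneg ‖u + (2 / μ) • (g - v)‖]

lemma quarter_mul_norm_add_smul_sq_le (hμ : 0 < μ) (u v g : E) :
    μ / 4 * ‖u + (2 / μ) • g‖ ^ 2 ≤
      ⟪v, u⟫_ℝ + μ / 2 * ‖u‖ ^ 2 + 1 / μ * (‖g‖ ^ 2 + ‖g - v‖ ^ 2) := by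
  have hsplit : ‖u + (2 / μ) • (g - v)‖ ^ 2 ≤ 2 * (‖u‖ ^ 2 + (2 / μ) ^ 2 * ‖g - v‖ ^ 2) := by
    calc ‖u + (2 / μ) • (g - v)‖ ^ 2 ≤ (‖u‖ + ‖(2 / μ) • (g - v)‖) ^ 2 :=
          pow_le_pow_left₀ (norm_nonneg _) (norm_add_le _ _) 2
      _ ≤ _ := by
          rw [norm_smul, Real.norm_of_nonneg (by positivity), ← mul_pow]
          exact add_sq_le
  rw [quarter_mul_norm_add_smul_sq_eq hμ.ne' u v]
  calc _ ≤ ⟪v, u⟫_ℝ + μ / 4 * (2 * (‖u‖ ^ 2 + (2 / μ) ^ 2 * ‖g - v‖ ^ 2))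
        + 1 / μ * (‖g‖ ^ 2 - ‖g - v‖ ^ 2) := by gcongr
    _ = _ := by field_simp; ring

end InnerProductSpace

section Noise

variable {E : Type*} [SeminormedAddCommGroup E] {g v : E} {α δ t : ℝ}

lemma norm_sub_sq_le (hnoise : ‖g - v‖ ≤ α * ‖v‖ + δ) :
    ‖g - v‖ ^ 2 ≤ 2 * (α ^ 2 * ‖v‖ ^ 2 + δ ^ 2) :=
  calc _ ≤ (α * ‖v‖ + δ) ^ 2 := pow_le_pow_left₀ (norm_nonneg _) hnoise 2
    _ ≤ _ := by rw [← mul_pow]; exact add_sq_le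

lemma norm_sq_add_norm_sub_sq_le (hnoise : ‖g - v‖ ≤ α * ‖v‖ + δ) (ht : 0 < t) :
    ‖g‖ ^ 2 + ‖g - v‖ ^ 2 ≤
      ((1 + t / 4) * (1 + α) ^ 2 + 2 * α ^ 2) * ‖v‖ ^ 2 + (4 * t⁻¹ + 3) * δ ^ 2 := by
  have hg : ‖g‖ ≤ (1 + α) * ‖v‖ + δ := by
    linarith [norm_le_norm_add_norm_sub' g v]
  have hg2 := sq_le_of_le_add ht (norm_nonneg g) hg
  have he2 := norm_sub_sq_le hnoise
  nlinarith

lemma le_norm_sq_sub_norm_sub_sq (hnoise : ‖g - v‖ ≤ α * ‖v‖ + δ) (hα : α ≤ 1) (ht : 0 < t)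
    (ht1 : t ≤ 1) :
    ((1 - t / 4) * (1 - α) ^ 2 - 2 * α ^ 2) * ‖v‖ ^ 2 - (4 * t⁻¹ + 1) * δ ^ 2 ≤
      ‖g‖ ^ 2 - ‖g - v‖ ^ 2 := by
  have hg : (1 - α) * ‖v‖ - δ ≤ ‖g‖ := by
    linarith [norm_le_norm_add_norm_sub' v g, norm_sub_rev g v]
  have hg2 := le_sq_of_sub_le ht ht1 (by nlinarith [norm_nonneg v]) hg
  have he2 := norm_sub_sq_le hnoise
  nlinarith

end Noise

theorem accelerated_quadratic_estimation_general {n : ℕ}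
    (f' g : EuclideanSpace ℝ (Fin n) → EuclideanSpace ℝ (Fin n))
    (μ L : ℝ) (hμ : 0 < μ) (hμL : μ ≤ L)
    (γ : ℝ) (hγ : 0 < γ)
    (α δ : ℝ) (hα1 : α < 1)
    (hnoise : ∀ x, ‖g x - f' x‖ ≤ α * ‖f' x‖ + δ) :
    ∀ x z : EuclideanSpace ℝ (Fin n),
      (μ / 4) * ‖x - z + (2 / μ) • g z‖ ^ 2 ≤
        ⟪f' z, x - z⟫_ℝ + (μ / 2) * ‖x - z‖ ^ 2
          + (1 / μ) * ((1 + (1 / 4) * (μ / (2 * L)) ^ γ) * (1 + α) ^ 2 + 2 * α ^ 2)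
              * ‖f' z‖ ^ 2
          + (1 / μ) * (4 * (2 * L / μ) ^ γ + 3) * δ ^ 2 ∧
      ⟪f' z, x - z⟫_ℝ
          + (1 / μ) * ((1 - (1 / 4) * (μ / (2 * L)) ^ γ) * (1 - α) ^ 2 - 2 * α ^ 2)
              * ‖f' z‖ ^ 2
          - (1 / μ) * (4 * (2 * L / μ) ^ γ + 1) * δ ^ 2 ≤
        (μ / 4) * ‖x - z + (2 / μ) • g z‖ ^ 2 := by
  intro x z
  have hL : 0 < L := hμ.trans_le hμL
  have hT : (2 * L / μ) ^ γ = ((μ / (2 * L)) ^ γ)⁻¹ := by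
    rw [← Real.inv_rpow (by positivity), inv_div]
  have ht : 0 < (μ / (2 * L)) ^ γ := by positivity
  have ht1 : (μ / (2 * L)) ^ γ ≤ 1 :=
    Real.rpow_le_one (by positivity) ((div_le_one (by positivity)).mpr (by linarith)) hγ.le
  rw [hT]
  set t := (μ / (2 * L)) ^ γ
  constructor
  · calc _ ≤ _ := quarter_mul_norm_add_smul_sq_le hμ (x - z) (f' z) (g z)
      _ ≤ ⟪f' z, x - z⟫_ℝ + μ / 2 * ‖x - z‖ ^ 2 + 1 / μ *
            (((1 + t / 4) * (1 + α) ^ 2 + 2 * α ^ 2) * ‖f' z‖ ^ 2 + (4 * t⁻¹ + 3) * δ ^ 2) := by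
          gcongr _ + _ * ?_; exact norm_sq_add_norm_sub_sq_le (hnoise z) ht
      _ = _ := by ring
  · calc _ = ⟪f' z, x - z⟫_ℝ + 1 / μ *
            (((1 - t / 4) * (1 - α) ^ 2 - 2 * α ^ 2) * ‖f' z‖ ^ 2 - (4 * t⁻¹ + 1) * δ ^ 2) := by
          ring
      _ ≤ ⟪f' z, x - z⟫_ℝ + 1 / μ * (‖g z‖ ^ 2 - ‖g z - f' z‖ ^ 2) := by
          gcongr _ + _ * ?_; exact le_norm_sq_sub_norm_sub_sq (hnoise z) hα1.le ht ht1
      _ ≤ _ := inner_add_le_quarter_mul_norm_add_smul_sq hμ (x - z) (f' z) (g z)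

/-- Quadratic estimation for the accelerated method with composite gradient noise. -/
theorem accelerated_quadratic_estimation {n : ℕ} (f : EuclideanSpace ℝ (Fin n) → ℝ)
    (f' g : EuclideanSpace ℝ (Fin n) → EuclideanSpace ℝ (Fin n))
    (hgrad : ∀ x, HasGradientAt f (f' x) x)
    (μ L : ℝ) (hμ : 0 < μ) (hμL : μ ≤ L)
    (γ : ℝ) (hγ : 0 < γ)
    (α δ : ℝ) (hα0 : 0 ≤ α) (hα1 : α < 1) (hδ : 0 ≤ δ)
    (hnoise : ∀ x, ‖g x - f' x‖ ≤ α * ‖f' x‖ + δ) :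
    ∀ x z : EuclideanSpace ℝ (Fin n),
      (μ / 4) * ‖x - z + (2 / μ) • g z‖ ^ 2 ≤
        ⟪f' z, x - z⟫_ℝ + (μ / 2) * ‖x - z‖ ^ 2
          + (1 / μ) * ((1 + (1 / 4) * (μ / (2 * L)) ^ γ) * (1 + α) ^ 2 + 2 * α ^ 2)
              * ‖f' z‖ ^ 2
          + (1 / μ) * (4 * (2 * L / μ) ^ γ + 3) * δ ^ 2 ∧
      ⟪f' z, x - z⟫_ℝ
          + (1 / μ) * ((1 - (1 / 4) * (μ / (2 * L)) ^ γ) * (1 - α) ^ 2 - 2 * α ^ 2)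
              * ‖f' z‖ ^ 2
          - (1 / μ) * (4 * (2 * L / μ) ^ γ + 1) * δ ^ 2 ≤
        (μ / 4) * ‖x - z + (2 / μ) • g z‖ ^ 2 :=
  accelerated_quadratic_estimation_general f' g μ L hμ hμL γ hγ α δ hα1 hnoise
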